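/- Let C be a function from pairs of binary trees to the nonnegative reals satisfying C(leaf, h) = 0 and C(h, leaf) = 0 for all trees h, and for all internal trees h₁ = node(l₁, d₁, r₁) and h₂ = node(l₂, d₂, r₂): C(h₁, h₂) ≤ 1 + max( ½·C(l₂, h₁) + ½·C(r₂, h₁), ½·C(l₁, h₂) + ½·C(r₁, h₂) ). Then the expected cost of the delete_min operation of randomised meldable heaps on a nonempty heap h = node(l, d, r), which melds the two children of the root, satisfies C(l, r) ≤ 2·log₂(|h|), i.e. C(l, r) ≤ 2·log₂(|l| + |r|). -/
import Mathlib

/-- Binary trees with data elements of type `α` at internal nodes. -/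
inductive BTree (α : Type) : Type
  | leaf : BTree α
  | node : BTree α → α → BTree α → BTree α

/-- The size of a tree is its number of leaves. -/
def BTree.size {α : Type} : BTree α → ℕ
  | .leaf => 1
  | .node l _ r => l.size + r.size

lemma btree_size_pos {α : Type} (t : BTree α) : 1 ≤ t.size := by
  induction t with
  | leaf => simp [BTree.size]
  | node l d r ihl ihr => simp [BTree.size]; omega

lemma half_log_add (a b : ℝ) (ha : 1 ≤ a) (hb : 1 ≤ b) :
    (1/2) * Real.logb 2 a + (1/2) * Real.logb 2 b + 1 ≤ Real.logb 2 (a + b) := by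
  have ha0 : 0 < a := by linarith
  have hb0 : 0 < b := by linarith
  have hab : a * b ≤ ((a + b) / 2) ^ 2 := by nlinarith [sq_nonneg (a - b)]
  have h1 : Real.logb 2 (a * b) ≤ Real.logb 2 (((a + b) / 2) ^ 2) :=
    Real.logb_le_logb_of_le one_lt_two (by positivity) hab
  rw [Real.logb_mul ha0.ne' hb0.ne', Real.logb_pow,
    Real.logb_div (by positivity) (by norm_num),
    Real.logb_self_eq_one (by norm_num)] at h1
  push_cast at h1
  linarith

lemma meld_bound {α : Type} (C : BTree α → BTree α → ℝ)
    (hC0 : ∀ h₁ h₂ : BTree α, 0 ≤ C h₁ h₂)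
    (hleafL : ∀ h : BTree α, C BTree.leaf h = 0)
    (hleafR : ∀ h : BTree α, C h BTree.leaf = 0)
    (hrec : ∀ (l₁ : BTree α) (d₁ : α) (r₁ : BTree α) (l₂ : BTree α) (d₂ : α) (r₂ : BTree α),
      C (BTree.node l₁ d₁ r₁) (BTree.node l₂ d₂ r₂) ≤
        1 + max ((1 / 2) * C l₂ (BTree.node l₁ d₁ r₁) + (1 / 2) * C r₂ (BTree.node l₁ d₁ r₁))
                ((1 / 2) * C l₁ (BTree.node l₂ d₂ r₂) + (1 / 2) * C r₁ (BTree.node l₂ d₂ r₂))) :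
    ∀ (n : ℕ) (t₁ t₂ : BTree α), t₁.size + t₂.size ≤ n →
      C t₁ t₂ ≤ Real.logb 2 (t₁.size : ℝ) + Real.logb 2 (t₂.size : ℝ) := by
  intro n
  induction n with
  | zero => intro t₁ t₂ h; exact absurd h (by have := btree_size_pos t₁; have := btree_size_pos t₂; omega)
  | succ n ih =>
    intro t₁ t₂ hsum
    have lognn : ∀ t : BTree α, 0 ≤ Real.logb 2 (t.size : ℝ) := fun t =>
      Real.logb_nonneg (by norm_num) (by exact_mod_cast btree_size_pos t)
    match t₁, t₂ with
    | .leaf, t₂ => rw [hleafL]; linarith [lognn (BTree.leaf : BTree α), lognn t₂]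
    | t₁, .leaf => rw [hleafR]; linarith [lognn (BTree.leaf : BTree α), lognn t₁]
    | .node l₁ d₁ r₁, .node l₂ d₂ r₂ =>
      have hl₁ := btree_size_pos l₁; have hr₁ := btree_size_pos r₁
      have hl₂ := btree_size_pos l₂; have hr₂ := btree_size_pos r₂
      simp only [BTree.size] at hsum
      have h1 : C l₂ (BTree.node l₁ d₁ r₁) ≤
          Real.logb 2 (l₂.size : ℝ) + Real.logb 2 ((BTree.node l₁ d₁ r₁).size : ℝ) := by
        apply ih; simp only [BTree.size]; omega
      have h2 : C r₂ (BTree.node l₁ d₁ r₁) ≤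
          Real.logb 2 (r₂.size : ℝ) + Real.logb 2 ((BTree.node l₁ d₁ r₁).size : ℝ) := by
        apply ih; simp only [BTree.size]; omega
      have h3 : C l₁ (BTree.node l₂ d₂ r₂) ≤
          Real.logb 2 (l₁.size : ℝ) + Real.logb 2 ((BTree.node l₂ d₂ r₂).size : ℝ) := by
        apply ih; simp only [BTree.size]; omega
      have h4 : C r₁ (BTree.node l₂ d₂ r₂) ≤
          Real.logb 2 (r₁.size : ℝ) + Real.logb 2 ((BTree.node l₂ d₂ r₂).size : ℝ) := by
        apply ih; simp only [BTree.size]; omega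
      have hgm₂ := half_log_add (l₂.size : ℝ) (r₂.size : ℝ)
        (by exact_mod_cast hl₂) (by exact_mod_cast hr₂)
      have hgm₁ := half_log_add (l₁.size : ℝ) (r₁.size : ℝ)
        (by exact_mod_cast hl₁) (by exact_mod_cast hr₁)
      have hs₁ : ((BTree.node l₁ d₁ r₁).size : ℝ) = (l₁.size : ℝ) + (r₁.size : ℝ) := by
        simp [BTree.size]
      have hs₂ : ((BTree.node l₂ d₂ r₂).size : ℝ) = (l₂.size : ℝ) + (r₂.size : ℝ) := by
        simp [BTree.size]
      simp only [BTree.size] at h1 h2 h3 h4 ⊢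
      push_cast at h1 h2 h3 h4 ⊢
      refine (hrec l₁ d₁ r₁ l₂ d₂ r₂).trans ?_
      apply add_le_of_le_sub_left
      apply max_le <;> nlinarith [hC0 l₂ (BTree.node l₁ d₁ r₁), hC0 r₂ (BTree.node l₁ d₁ r₁),
        hC0 l₁ (BTree.node l₂ d₂ r₂), hC0 r₁ (BTree.node l₂ d₂ r₂)]

/-- Under the expected-cost recurrence of `meld` for randomised meldable heaps, the expected
cost of `delete_min` on a nonempty heap `h = node l d r`, which melds the two children of
the root, satisfies `C l r ≤ 2·log₂ |h| = 2·log₂ (|l| + |r|)`. -/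
theorem delete_min_expected_cost_le_log {α : Type} (C : BTree α → BTree α → ℝ)
    (hC0 : ∀ h₁ h₂ : BTree α, 0 ≤ C h₁ h₂)
    (hleafL : ∀ h : BTree α, C BTree.leaf h = 0)
    (hleafR : ∀ h : BTree α, C h BTree.leaf = 0)
    (hrec : ∀ (l₁ : BTree α) (d₁ : α) (r₁ : BTree α) (l₂ : BTree α) (d₂ : α) (r₂ : BTree α),
      C (BTree.node l₁ d₁ r₁) (BTree.node l₂ d₂ r₂) ≤
        1 + max ((1 / 2) * C l₂ (BTree.node l₁ d₁ r₁) + (1 / 2) * C r₂ (BTree.node l₁ d₁ r₁))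
                ((1 / 2) * C l₁ (BTree.node l₂ d₂ r₂) + (1 / 2) * C r₁ (BTree.node l₂ d₂ r₂))) :
    ∀ (l : BTree α) (d : α) (r : BTree α),
      C l r ≤ 2 * Real.logb 2 ((BTree.node l d r).size : ℝ) := by
  intro l d r
  have hl := btree_size_pos l
  have hr := btree_size_pos r
  have key := meld_bound C hC0 hleafL hleafR hrec (l.size + r.size) l r le_rfl
  have h1 : Real.logb 2 (l.size : ℝ) ≤ Real.logb 2 ((BTree.node l d r).size : ℝ) := by
    apply Real.logb_le_logb_of_le one_lt_two (by exact_mod_cast hl)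
    simp only [BTree.size]; push_cast; linarith [(Nat.one_le_cast.mpr hr : (1:ℝ) ≤ r.size)]
  have h2 : Real.logb 2 (r.size : ℝ) ≤ Real.logb 2 ((BTree.node l d r).size : ℝ) := by
    apply Real.logb_le_logb_of_le one_lt_two (by exact_mod_cast hr)
    simp only [BTree.size]; push_cast; linarith [(Nat.one_le_cast.mpr hl : (1:ℝ) ≤ l.size)]
  linarith
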